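/- arXiv:1504.04508 — 2 statements merged into one kernel-verified Lean document; each statement's English description precedes it below -/
import Mathlib

section
/- Let M be a connected smooth manifold, φ a 3-form and θ a closed 1-form with dφ = −θ∧φ. Suppose the map sending 1-forms α to α∧φ is pointwise injective. If f is a smooth function and ω a 2-form with d_θ ω = f φ, then f is constant. -/
open scoped ContDiff

noncomputable section

/-- A differential `k`-form on the vector space (smooth manifold) `E`,
given by its evaluation on `k` tangent vectors at each point. -/
def Form (E : Type*) [NormedAddCommGroup E] [NormedSpace ℝ E] (k : ℕ) :=
  E → (Fin k → E) → ℝ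

variable {E : Type*} [NormedAddCommGroup E] [NormedSpace ℝ E]

/-- The exterior derivative of a `k`-form on a vector space, via the standard
formula `dα(v₀,…,v_k) = Σᵢ (−1)ⁱ ∂_{vᵢ} α(v₀,…,v̂ᵢ,…,v_k)` for constant vector fields. -/
def extd {k : ℕ} (α : Form E k) : Form E (k + 1) :=
  fun x v => ∑ i : Fin (k + 1),
    (-1 : ℝ) ^ (i : ℕ) * fderiv ℝ (fun y => α y (fun j => v (i.succAbove j))) x (v i)

/-- Wedge product of a 1-form with a `k`-form. -/
def wedge1 {k : ℕ} (θ : Form E 1) (α : Form E k) : Form E (k + 1) :=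
  fun x v => ∑ i : Fin (k + 1),
    (-1 : ℝ) ^ (i : ℕ) * θ x ![v i] * α x (fun j => v (i.succAbove j))

/-- The twisted differential `d_θ α = dα + θ ∧ α`. -/
def dTheta {k : ℕ} (θ : Form E 1) (α : Form E k) : Form E (k + 1) :=
  fun x v => extd α x v + wedge1 θ α x v

/-- A form is smooth if each of its evaluations on fixed tangent vectors is smooth
and it is pointwise alternating and multilinear. -/
def SmoothForm {k : ℕ} (α : Form E k) : Prop :=
  (∀ v : Fin k → E, ContDiff ℝ ∞ (fun x => α x v)) ∧
  (∀ x, ∃ A : E [⋀^Fin k]→ₗ[ℝ] ℝ, ∀ v, α x v = A v)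

/-- The interior product of a vector field with a `(k+1)`-form. -/
def iProd {k : ℕ} (X : E → E) (φ : Form E (k + 1)) : Form E k :=
  fun x v => φ x (Fin.cons (X x) v)

/-- The Lie derivative of a form along a vector field, via Cartan's magic formula
`L_X = d ∘ i_X + i_X ∘ d`. -/
def lieDeriv {k : ℕ} (X : E → E) (φ : Form E (k + 1)) : Form E (k + 1) :=
  fun x v => extd (iProd X φ) x v + iProd X (extd φ) x v

end

/-! Twisting by a closed `1`-form keeps `d_θ` a differential: expanded in coordinates,
`d_θ (d_θ α) (v₀, …, v_{k+1})` is an alternating double sum over ordered pairs of slots of an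
expression `g (vᵢ, vⱼ; rest)` that is symmetric in the pair, because second derivatives commute
and `dθ = 0`; such a sum cancels in pairs. Applying `d_θ` to `d_θ ω = f φ` and using the Leibniz
rule `d_θ (f φ) = df ∧ φ + f d_θ φ` with `d_θ φ = 0` gives `df ∧ φ = 0`, hence `df = 0` by the
pointwise injectivity of `α ↦ α ∧ φ`, and `f` is constant on the connected space `E`. -/

theorem Fin.sum_sum_succAbove_eq_zero_of_symm {R α : Type*} [CommRing R] {n : ℕ}
    (g : α → α → (Fin n → α) → R) (hg : ∀ a b w, g a b w = g b a w) (v : Fin (n + 2) → α) :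
    ∑ i : Fin (n + 2), (-1 : R) ^ (i : ℕ) * ∑ j : Fin (n + 1), (-1 : R) ^ (j : ℕ) *
      g (v i) (v (i.succAbove j)) (fun k => v (i.succAbove (j.succAbove k))) = 0 := by
  -- group the term of each pair `(i, j + 1)`, `i ≤ j`, with that of `(j + 1, i)`; they cancel
  simp only [Finset.mul_sum, Fin.sum_sum_eq_sum_triangle_add]
  refine Finset.sum_eq_zero fun i _ => Finset.sum_eq_zero fun j hj => ?_
  rw [Finset.mem_Ici] at hj
  have hj_succ : i.castSucc.succAbove j = j.succ := Fin.succAbove_of_le_castSucc _ _ hj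
  have hi_castSucc : j.succ.succAbove i = i.castSucc :=
    Fin.succAbove_of_castSucc_lt _ _ (by simpa using hj)
  have hrest := congrFun (Fin.removeNth_removeNth_eq_swap v j i.castSucc)
  have hpred : j.predAbove i.castSucc = i := by simp [Fin.predAbove, hj]
  simp only [Fin.removeNth, hpred] at hrest
  simp only [hj_succ, hi_castSucc, Fin.val_castSucc, Fin.val_succ, pow_succ, hrest, hg (v j.succ)]
  ring

section
variable {E : Type*} [NormedAddCommGroup E] [NormedSpace ℝ E]

theorem ContDiff.differentiable_fderiv_apply {g : E → ℝ} (hg : ContDiff ℝ 2 g) (u : E) :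
    Differentiable ℝ (fun y => fderiv ℝ g y u) :=
  ((hg.fderiv_right (m := 1) (by norm_num)).differentiable one_ne_zero).clm_apply
    (differentiable_const u)

theorem fderiv_fderiv_apply_comm {g : E → ℝ} (hg : ContDiff ℝ 2 g) (x u w : E) :
    fderiv ℝ (fun y => fderiv ℝ g y u) x w = fderiv ℝ (fun y => fderiv ℝ g y w) x u := by
  have hd : DifferentiableAt ℝ (fderiv ℝ g) x :=
    (hg.fderiv_right (m := 1) (by norm_num)).differentiable one_ne_zero x
  rw [fderiv_clm_apply hd (differentiableAt_const u),
    fderiv_clm_apply hd (differentiableAt_const w)]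
  simpa using (hg.contDiffAt.isSymmSndFDerivAt (by simp)).eq w u

theorem fderiv_dTheta_apply {k : ℕ} {θ : Form E 1} {α : Form E k}
    (hθ : ∀ w, Differentiable ℝ (θ · w)) (hα : ∀ w, ContDiff ℝ 2 (α · w))
    (w : Fin (k + 1) → E) (x u : E) :
    fderiv ℝ (fun y => dTheta θ α y w) x u = ∑ j : Fin (k + 1), (-1 : ℝ) ^ (j : ℕ) *
      (fderiv ℝ (fun y => fderiv ℝ (fun z => α z fun l => w (j.succAbove l)) y (w j)) x u
        + fderiv ℝ (fun y => θ y ![w j]) x u * α x (fun l => w (j.succAbove l))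
        + θ x ![w j] * fderiv ℝ (fun y => α y fun l => w (j.succAbove l)) x u) := by
  have hsum : HasFDerivAt (fun y => dTheta θ α y w)
      (∑ j : Fin (k + 1), (-1 : ℝ) ^ (j : ℕ) •
        (fderiv ℝ (fun y => fderiv ℝ (fun z => α z fun l => w (j.succAbove l)) y (w j)) x
          + (θ x ![w j] • fderiv ℝ (fun y => α y fun l => w (j.succAbove l)) x
            + α x (fun l => w (j.succAbove l)) • fderiv ℝ (fun y => θ y ![w j]) x))) x := by
    have hfun : (fun y => dTheta θ α y w) = fun y => ∑ j : Fin (k + 1), (-1 : ℝ) ^ (j : ℕ) *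
        (fderiv ℝ (fun z => α z fun l => w (j.succAbove l)) y (w j)
          + θ y ![w j] * α y fun l => w (j.succAbove l)) := by
      funext y
      simp only [dTheta, extd, wedge1, mul_add, Finset.sum_add_distrib, mul_assoc]
    rw [hfun]
    exact HasFDerivAt.fun_sum fun j _ =>
      ((((hα _).differentiable_fderiv_apply _ x).hasFDerivAt).add
        (((hθ _ x).hasFDerivAt).mul
          (((hα _).differentiable (by norm_num) x).hasFDerivAt))).const_mul _
  rw [hsum.fderiv]
  simp only [FunLike.coe_sum, Finset.sum_apply, FunLike.coe_smul,
    Pi.smul_apply, add_apply, smul_eq_mul]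
  exact Finset.sum_congr rfl fun j _ => by ring

theorem fderiv_apply_comm_of_extd_eq_zero {θ : Form E 1} {x : E}
    (hclosed : ∀ v, extd θ x v = 0) (a b : E) :
    fderiv ℝ (fun y => θ y ![a]) x b = fderiv ℝ (fun y => θ y ![b]) x a := by
  have h := hclosed ![b, a]
  have e₀ : (fun j : Fin 1 => (![b, a] : Fin 2 → E) ((0 : Fin 2).succAbove j)) = ![a] := by
    funext j; fin_cases j; rfl
  have e₁ : (fun j : Fin 1 => (![b, a] : Fin 2 → E) ((1 : Fin 2).succAbove j)) = ![b] := by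
    funext j; fin_cases j; rfl
  simp only [extd, Nat.reduceAdd, Fin.sum_univ_two, Fin.val_zero, Fin.val_one, pow_zero, pow_one,
    one_mul, neg_one_mul, Matrix.cons_val_zero, Matrix.cons_val_one, e₀, e₁] at h
  linarith

theorem dTheta_dTheta_apply {k : ℕ} {θ : Form E 1} {α : Form E k}
    (hθ : ∀ w, Differentiable ℝ (θ · w)) {x : E} (hclosed : ∀ v, extd θ x v = 0)
    (hα : ∀ w, ContDiff ℝ 2 (α · w)) (v : Fin (k + 2) → E) :
    dTheta θ (dTheta θ α) x v = 0 := by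
  set g : E → E → (Fin k → E) → ℝ := fun a b r =>
    fderiv ℝ (fun y => fderiv ℝ (fun z => α z r) y b) x a
      + fderiv ℝ (fun y => θ y ![b]) x a * α x r
      + θ x ![b] * fderiv ℝ (fun y => α y r) x a + θ x ![a] * fderiv ℝ (fun y => α y r) x b
      + θ x ![a] * θ x ![b] * α x r with hg_def
  have hg : ∀ a b r, g a b r = g b a r := fun a b r => by
    simp only [hg_def, fderiv_fderiv_apply_comm (hα r) x a b,
      fderiv_apply_comm_of_extd_eq_zero hclosed a b]
    ring
  calc dTheta θ (dTheta θ α) x v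
      = ∑ i : Fin (k + 2), (-1 : ℝ) ^ (i : ℕ) * ∑ j : Fin (k + 1), (-1 : ℝ) ^ (j : ℕ) *
          g (v i) (v (i.succAbove j)) (fun l => v (i.succAbove (j.succAbove l))) := by
        change ∑ i : Fin (k + 2), (-1 : ℝ) ^ (i : ℕ) *
              fderiv ℝ (fun y => dTheta θ α y fun j => v (i.succAbove j)) x (v i)
            + ∑ i : Fin (k + 2), (-1 : ℝ) ^ (i : ℕ) * θ x ![v i] *
              dTheta θ α x (fun j => v (i.succAbove j)) = _
        simp only [fderiv_dTheta_apply hθ hα]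
        simp only [dTheta, extd, wedge1, Finset.mul_sum, ← Finset.sum_add_distrib]
        refine Finset.sum_congr rfl fun i _ => Finset.sum_congr rfl fun j _ => ?_
        simp only [hg_def]
        ring
    _ = 0 := Fin.sum_sum_succAbove_eq_zero_of_symm g hg v

-- A function `f` is the `0`-form `fun y _ => f y`, so `extd` of it is the `1`-form `df`.
theorem dTheta_mul_apply {k : ℕ} (θ : Form E 1) {f : E → ℝ} {α : Form E k} {x : E}
    (hf : DifferentiableAt ℝ f x) (hα : ∀ w, DifferentiableAt ℝ (α · w) x)
    (v : Fin (k + 1) → E) :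
    dTheta θ (fun y w => f y * α y w) x v
      = wedge1 (extd fun y (_ : Fin 0 → E) => f y) α x v + f x * dTheta θ α x v := by
  simp only [dTheta, extd, wedge1, fderiv_fun_mul hf (hα _), Nat.reduceAdd, Fin.sum_univ_one,
    Fin.val_zero, pow_zero, one_mul, Matrix.cons_val_zero, add_apply, smul_apply, smul_eq_mul,
    Finset.mul_sum, ← Finset.sum_add_distrib]
  exact Finset.sum_congr rfl fun i _ => by ring

end

/-- If `M` is connected, `dφ = -θ ∧ φ`, `α ↦ α ∧ φ` is pointwise
injective on 1-forms, and `d_θ om = f φ`, then `f` is constant. -/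
theorem dTheta_eq_smul_const {E : Type*} [NormedAddCommGroup E] [NormedSpace ℝ E]
    (θ : Form E 1) (hθ : SmoothForm θ) (hclosed : ∀ x v, extd θ x v = 0)
    (φ : Form E 3) (hφ : SmoothForm φ)
    (hlcc : ∀ x v, extd φ x v = -wedge1 θ φ x v)
    (hinj : ∀ (x : E) (ℓ : E →ₗ[ℝ] ℝ),
      (∀ v : Fin 4 → E,
        ∑ i : Fin 4, (-1 : ℝ) ^ (i : ℕ) * ℓ (v i) * φ x (fun j => v (i.succAbove j)) = 0) →
      ℓ = 0)
    (f : E → ℝ) (hf : ContDiff ℝ ∞ f) (om : Form E 2) (hom : SmoothForm om)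
    (heq : ∀ x v, dTheta θ om x v = f x * φ x v) :
    ∀ x y : E, f x = f y := by
  have hdTheta_φ : ∀ x v, dTheta θ φ x v = 0 := fun x v => by simp [dTheta, hlcc]
  have hdf_wedge : ∀ x v, wedge1 (extd fun y (_ : Fin 0 → E) => f y) φ x v = 0 := by
    intro x v
    have h := dTheta_dTheta_apply (fun w => (hθ.1 w).differentiable (by simp)) (hclosed x)
      (fun w => (hom.1 w).of_le (by decide)) v
    rw [show dTheta θ om = fun y w => f y * φ y w from funext₂ heq,
      dTheta_mul_apply θ (hf.differentiable (by simp) x)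
        (fun w => (hφ.1 w).differentiable (by simp) x), hdTheta_φ] at h
    simpa using h
  have hdf : ∀ x, fderiv ℝ f x = 0 := fun x =>
    ContinuousLinearMap.coe_injective <| hinj x (fderiv ℝ f x) fun v => by
      simpa [wedge1, extd] using hdf_wedge x v
  exact is_const_of_fderiv_eq_zero (hf.differentiable (by simp)) hdf
end

section
/- On the seven-dimensional Lie algebra 𝔰 with structure equations de¹ = e³⁷, de² = e⁴⁷, de³ = −e¹⁷, de⁴ = −e²⁷, de⁵ = e¹⁴ + e²³, de⁶ = e¹³ − e²⁴, de⁷ = 0 (with respect to a basis e¹,...,e⁷ of the dual), the 3-form φ = (e¹² + e³⁴ + e⁵⁶) ∧ e⁷ + e¹³⁵ − e¹⁴⁶ − e²³⁶ − e²⁴⁵ satisfies dφ = e⁷ ∧ φ; that is, φ is locally conformal calibrated with Lee form θ = −e⁷. -/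
noncomputable section

variable {n : ℕ}

/-- The `i`-th coordinate covector `eᵢ`. -/
def ec (i : Fin n) : (Fin n → ℝ) → ℝ := fun x => x i

/-- A bracket is a Lie bracket if it is bilinear, antisymmetric and satisfies
the Jacobi identity. -/
def IsLieBracket (br : (Fin n → ℝ) → (Fin n → ℝ) → (Fin n → ℝ)) : Prop :=
  (∀ x y z, br (x + y) z = br x z + br y z) ∧
  (∀ (a : ℝ) x y, br (a • x) y = a • br x y) ∧
  (∀ x y, br x y = -br y x) ∧
  (∀ x y z, br x (br y z) + br y (br z x) + br z (br x y) = 0)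

/-- Chevalley–Eilenberg differential of a 1-form: `dα(x,y) = -α([x,y])`. -/
def ced1 (br : (Fin n → ℝ) → (Fin n → ℝ) → (Fin n → ℝ)) (α : (Fin n → ℝ) → ℝ) :
    (Fin n → ℝ) → (Fin n → ℝ) → ℝ :=
  fun x y => -α (br x y)

/-- Chevalley–Eilenberg differential of a 2-form. -/
def ced2 (br : (Fin n → ℝ) → (Fin n → ℝ) → (Fin n → ℝ))
    (α : (Fin n → ℝ) → (Fin n → ℝ) → ℝ) :
    (Fin n → ℝ) → (Fin n → ℝ) → (Fin n → ℝ) → ℝ :=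
  fun x y z => -α (br x y) z + α (br x z) y - α (br y z) x

/-- Chevalley–Eilenberg differential of a 3-form. -/
def ced3 (br : (Fin n → ℝ) → (Fin n → ℝ) → (Fin n → ℝ))
    (α : (Fin n → ℝ) → (Fin n → ℝ) → (Fin n → ℝ) → ℝ) :
    (Fin n → ℝ) → (Fin n → ℝ) → (Fin n → ℝ) → (Fin n → ℝ) → ℝ :=
  fun w x y z =>
    -α (br w x) y z + α (br w y) x z - α (br w z) x y
      - α (br x y) w z + α (br x z) w y - α (br y z) w x

/-- Chevalley–Eilenberg differential of a 4-form. -/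
def ced4 (br : (Fin n → ℝ) → (Fin n → ℝ) → (Fin n → ℝ))
    (β : (Fin n → ℝ) → (Fin n → ℝ) → (Fin n → ℝ) → (Fin n → ℝ) → ℝ) :
    (Fin n → ℝ) → (Fin n → ℝ) → (Fin n → ℝ) → (Fin n → ℝ) → (Fin n → ℝ) → ℝ :=
  fun x0 x1 x2 x3 x4 =>
    -β (br x0 x1) x2 x3 x4 + β (br x0 x2) x1 x3 x4 - β (br x0 x3) x1 x2 x4
      + β (br x0 x4) x1 x2 x3 - β (br x1 x2) x0 x3 x4 + β (br x1 x3) x0 x2 x4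
      - β (br x1 x4) x0 x2 x3 - β (br x2 x3) x0 x1 x4 + β (br x2 x4) x0 x1 x3
      - β (br x3 x4) x0 x1 x2

/-- Wedge of two 1-forms. -/
def w11 (α β : (Fin n → ℝ) → ℝ) : (Fin n → ℝ) → (Fin n → ℝ) → ℝ :=
  fun x y => α x * β y - α y * β x

/-- Wedge of a 1-form and a 2-form. -/
def w12 (θ : (Fin n → ℝ) → ℝ) (α : (Fin n → ℝ) → (Fin n → ℝ) → ℝ) :
    (Fin n → ℝ) → (Fin n → ℝ) → (Fin n → ℝ) → ℝ :=
  fun x y z => θ x * α y z - θ y * α x z + θ z * α x y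

/-- Wedge of a 2-form and a 1-form. -/
def w21 (α : (Fin n → ℝ) → (Fin n → ℝ) → ℝ) (θ : (Fin n → ℝ) → ℝ) :
    (Fin n → ℝ) → (Fin n → ℝ) → (Fin n → ℝ) → ℝ :=
  fun x y z => α x y * θ z - α x z * θ y + α y z * θ x

/-- Wedge of a 1-form and a 3-form. -/
def w13 (θ : (Fin n → ℝ) → ℝ)
    (ψ : (Fin n → ℝ) → (Fin n → ℝ) → (Fin n → ℝ) → ℝ) :
    (Fin n → ℝ) → (Fin n → ℝ) → (Fin n → ℝ) → (Fin n → ℝ) → ℝ :=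
  fun w x y z => θ w * ψ x y z - θ x * ψ w y z + θ y * ψ w x z - θ z * ψ w x y

/-- Wedge of two 2-forms. -/
def w22 (α β : (Fin n → ℝ) → (Fin n → ℝ) → ℝ) :
    (Fin n → ℝ) → (Fin n → ℝ) → (Fin n → ℝ) → (Fin n → ℝ) → ℝ :=
  fun x0 x1 x2 x3 =>
    α x0 x1 * β x2 x3 - α x0 x2 * β x1 x3 + α x0 x3 * β x1 x2
      + α x2 x3 * β x0 x1 - α x1 x3 * β x0 x2 + α x1 x2 * β x0 x3

/-- The basic wedge monomial `eⁱ ∧ eʲ ∧ eᵏ` (0-indexed). -/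
def trip (i j k : Fin n) : (Fin n → ℝ) → (Fin n → ℝ) → (Fin n → ℝ) → ℝ :=
  fun x y z =>
    x i * y j * z k - x i * y k * z j - x j * y i * z k
      + x j * y k * z i + x k * y i * z j - x k * y j * z i

end

noncomputable section

/-- The structure equations of the solvable Lie algebra `𝔰`:
`de¹ = e³⁷, de² = e⁴⁷, de³ = -e¹⁷, de⁴ = -e²⁷, de⁵ = e¹⁴ + e²³,
de⁶ = e¹³ - e²⁴, de⁷ = 0` (0-indexed below). -/
def structEqS (br : (Fin 7 → ℝ) → (Fin 7 → ℝ) → (Fin 7 → ℝ)) : Prop :=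
  ∀ x y : Fin 7 → ℝ,
    ced1 br (ec 0) x y = w11 (ec 2) (ec 6) x y ∧
    ced1 br (ec 1) x y = w11 (ec 3) (ec 6) x y ∧
    ced1 br (ec 2) x y = -w11 (ec 0) (ec 6) x y ∧
    ced1 br (ec 3) x y = -w11 (ec 1) (ec 6) x y ∧
    ced1 br (ec 4) x y = w11 (ec 0) (ec 3) x y + w11 (ec 1) (ec 2) x y ∧
    ced1 br (ec 5) x y = w11 (ec 0) (ec 2) x y - w11 (ec 1) (ec 3) x y ∧
    ced1 br (ec 6) x y = 0

/-- The `G₂`-form `φ = (e¹² + e³⁴ + e⁵⁶) ∧ e⁷ + e¹³⁵ - e¹⁴⁶ - e²³⁶ - e²⁴⁵`. -/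
def phiS : (Fin 7 → ℝ) → (Fin 7 → ℝ) → (Fin 7 → ℝ) → ℝ :=
  fun x y z =>
    w21 (fun a b => w11 (ec 0) (ec 1) a b + w11 (ec 2) (ec 3) a b +
      w11 (ec 4) (ec 5) a b) (ec 6) x y z +
    (trip 0 2 4 x y z - trip 0 3 5 x y z - trip 1 2 5 x y z - trip 1 3 4 x y z)

/-! Since `[x, y]ₖ = -deᵏ(x, y)`, the structure equations determine the bracket completely: it is
`brS`. So it suffices to check the Jacobi identity for `brS`, after which `dφ = e⁷ ∧ φ` is a polynomial
identity in the coordinates of the four arguments. -/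

def brS (x y : Fin 7 → ℝ) : Fin 7 → ℝ :=
  ![x 6 * y 2 - x 2 * y 6, x 6 * y 3 - x 3 * y 6, x 0 * y 6 - x 6 * y 0,
    x 1 * y 6 - x 6 * y 1, x 3 * y 0 - x 0 * y 3 + x 2 * y 1 - x 1 * y 2,
    x 2 * y 0 - x 0 * y 2 + x 1 * y 3 - x 3 * y 1, 0]

theorem isLieBracket_brS : IsLieBracket brS := by
  refine ⟨fun x y z => ?_, fun a x y => ?_, fun x y => ?_, fun x y z => ?_⟩ <;>
    funext i <;> fin_cases i <;>
      simp only [brS, Pi.add_apply, Pi.smul_apply, Pi.neg_apply, Pi.zero_apply, smul_eq_mul,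
        Fin.zero_eta, Fin.mk_one, Fin.reduceFinMk, Matrix.cons_val] <;> ring

theorem structEqS_iff {br : (Fin 7 → ℝ) → (Fin 7 → ℝ) → (Fin 7 → ℝ)} :
    structEqS br ↔ br = brS := by
  constructor
  · intro h
    funext x y i
    obtain ⟨h0, h1, h2, h3, h4, h5, h6⟩ := h x y
    simp only [ced1, ec, w11] at h0 h1 h2 h3 h4 h5 h6
    fin_cases i <;>
      simp only [brS, Fin.zero_eta, Fin.mk_one, Fin.reduceFinMk, Matrix.cons_val] <;> linarith
  · rintro rfl x y
    refine ⟨?_, ?_, ?_, ?_, ?_, ?_, ?_⟩ <;>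
      simp only [ced1, ec, w11, brS, Matrix.cons_val] <;> ring

theorem ced3_brS_phiS (w x y z : Fin 7 → ℝ) :
    ced3 brS phiS w x y z = w13 (ec 6) phiS w x y z := by
  simp only [ced3, w13, phiS, w21, w11, trip, ec, brS, Matrix.cons_val]
  ring

/-- The structure equations of `𝔰` define a Lie algebra, and for
its Chevalley–Eilenberg differential, `dφ = e⁷ ∧ φ`, i.e. `φ` is locally
conformal calibrated with Lee form `θ = -e⁷`. -/
theorem lcc_on_s :
    (∃ br : (Fin 7 → ℝ) → (Fin 7 → ℝ) → (Fin 7 → ℝ), IsLieBracket br ∧ structEqS br) ∧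
    ∀ br : (Fin 7 → ℝ) → (Fin 7 → ℝ) → (Fin 7 → ℝ), IsLieBracket br → structEqS br →
      ∀ w x y z : Fin 7 → ℝ, ced3 br phiS w x y z = w13 (ec 6) phiS w x y z := by
  refine ⟨⟨brS, isLieBracket_brS, structEqS_iff.mpr rfl⟩, ?_⟩
  intro br _ hbr
  rw [structEqS_iff.mp hbr]
  exact ced3_brS_phiS

end
end
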